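/- For every real number t in the open interval I = (θ, −13), one has Q3(α(t), t) = 0, where Q3(a, t) = (11243366790769 + 1414302826044t − 1165440897006t^2 − 225646565396t^3 + 38213311311t^4 + 11448834552t^5 − 152423364t^6 − 231859656t^7 − 11635425t^8 + 1600204t^9 + 138450t^10 + 732t^11 + t^12) + a^2·(−22569735604130 − 3071056384440t + 2108952113820t^2 + 410418431848t^3 − 47150209566t^4 − 15418665072t^5 − 125813496t^6 + 206967312t^7 + 7843842t^8 − 1161176t^9 − 36324t^10 + 2184t^11 − 2t^12) + a^4·(11326363139377 + 1656707880828t − 943672290990t^2 − 185096942420t^3 + 8526067407t^4 + 3636819576t^5 + 109344444t^6 − 23639112t^7 − 1673505t^8 + 24844t^9 + 5394t^10 + 156t^11 + t^12). -/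

import Mathlib

/-!
Viewed as a quadratic in `a ^ 2`, `Q3 · t` has, by Vieta's formulas, the two conjugate roots
`(pa1 t ± pa2 t * ω t) / q5 t`, where `ω t ^ 2 = 3 * (506 + 75 * t - t ^ 3)`. So
`Q3 (α t) t = 0` as soon as the square root defining `α t` does not truncate, i.e. its radicand
is nonnegative. Every root of the cubic defining `θ` exceeds `-28`, and on `(-28, -13)` we have
`q5 t < 0`, `pa2 t < 0` and `pa1 t ^ 2 < pa2 t ^ 2 * ω t ^ 2`, so the numerator
`pa1 t + pa2 t * ω t` is `≤ 0`.
The two polynomial inequalities of high degree are certified by expanding the polynomials in the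
Bernstein basis `(t + 28) ^ i * (-13 - t) ^ (n - i)` of that interval, where all coefficients
are nonnegative.
-/

noncomputable section

def ω (t : ℝ) : ℝ := Real.sqrt (3 * (506 + 75 * t - t ^ 3))

def q5 (t : ℝ) : ℝ := (t - 11) ^ 2 * (13 + t) ^ 5 * (-1763 + 75 * t + 111 * t ^ 2 + t ^ 3)

def pa1 (t : ℝ) : ℝ :=
  -78915159455 - 11841667910 * t + 6656486445 * t ^ 2 + 1445318328 * t ^ 3 -
    98097774 * t ^ 4 - 45176292 * t ^ 5 - 1757742 * t ^ 6 + 383160 * t ^ 7 +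
    20493 * t ^ 8 - 1094 * t ^ 9 + t ^ 10

def pa2 (t : ℝ) : ℝ :=
  -32 * (-237047 - 688048 * t - 631196 * t ^ 2 - 136576 * t ^ 3 + 52510 * t ^ 4 +
    7760 * t ^ 5 - 1292 * t ^ 6 - 160 * t ^ 7 + t ^ 8)

def α (t : ℝ) : ℝ := Real.sqrt ((pa1 t + pa2 t * ω t) / q5 t)

def Q3 (a t : ℝ) : ℝ :=
  (11243366790769 + 1414302826044 * t - 1165440897006 * t ^ 2 - 225646565396 * t ^ 3 +
      38213311311 * t ^ 4 + 11448834552 * t ^ 5 - 152423364 * t ^ 6 - 231859656 * t ^ 7 -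
      11635425 * t ^ 8 + 1600204 * t ^ 9 + 138450 * t ^ 10 + 732 * t ^ 11 + t ^ 12) +
  a ^ 2 * (-22569735604130 - 3071056384440 * t + 2108952113820 * t ^ 2 +
      410418431848 * t ^ 3 - 47150209566 * t ^ 4 - 15418665072 * t ^ 5 -
      125813496 * t ^ 6 + 206967312 * t ^ 7 + 7843842 * t ^ 8 - 1161176 * t ^ 9 -
      36324 * t ^ 10 + 2184 * t ^ 11 - 2 * t ^ 12) +
  a ^ 4 * (11326363139377 + 1656707880828 * t - 943672290990 * t ^ 2 -
      185096942420 * t ^ 3 + 8526067407 * t ^ 4 + 3636819576 * t ^ 5 +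
      109344444 * t ^ 6 - 23639112 * t ^ 7 - 1673505 * t ^ 8 + 24844 * t ^ 9 +
      5394 * t ^ 10 + 156 * t ^ 11 + t ^ 12)

open Set

theorem pos_of_bernstein_certificate {a b t p K : ℝ} (hat : a < t) (htb : t < b) (hK : 0 < K)
    {n : ℕ} (c : Fin (n + 1) → ℝ) (hc : ∀ i, 0 ≤ c i) (hc0 : 0 < c 0)
    (hp : K * p = ∑ i, c i * (t - a) ^ (i : ℕ) * (b - t) ^ (n - i)) : 0 < p := by
  have hta := sub_pos.2 hat
  have hbt := sub_pos.2 htb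
  have hsum : 0 < ∑ i, c i * (t - a) ^ (i : ℕ) * (b - t) ^ (n - i) := by
    rw [Fin.sum_univ_succ]
    refine add_pos_of_pos_of_nonneg (by simpa using mul_pos hc0 (pow_pos hbt n)) ?_
    exact Finset.sum_nonneg fun i _ ↦
      mul_nonneg (mul_nonneg (hc _) (pow_nonneg hta.le _)) (pow_nonneg hbt.le _)
  exact pos_of_mul_pos_right (hp ▸ hsum) hK.le

-- x ^ 3 + 27 * x ^ 2 - 93 * x - 1847 = (x + 28) * (x ^ 2 - x - 65) - 27
theorem neg_28_lt_of_cubic_eq_zero {x : ℝ} (hx : x ^ 3 + 27 * x ^ 2 - 93 * x - 1847 = 0) :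
    -28 < x := by
  by_contra! h
  have hq : 0 ≤ x ^ 2 - x - 65 := by nlinarith
  nlinarith [mul_nonneg (by linarith : 0 ≤ -(x + 28)) hq]

section
variable {t : ℝ}

theorem radicand_ω_pos (ht : t ∈ Ioo (-28 : ℝ) (-13)) : 0 < 3 * (506 + 75 * t - t ^ 3) := by
  obtain ⟨h1, h2⟩ := ht
  nlinarith [mul_pos (sub_pos.2 h1) (sub_pos.2 h2)]

theorem ω_sq (ht : t ∈ Ioo (-28 : ℝ) (-13)) : ω t ^ 2 = 3 * (506 + 75 * t - t ^ 3) :=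
  Real.sq_sqrt (radicand_ω_pos ht).le

theorem q5_neg (ht : t ∈ Ioo (-28 : ℝ) (-13)) : q5 t < 0 := by
  obtain ⟨h1, h2⟩ := ht
  have hcubic : 0 < -1763 + 75 * t + 111 * t ^ 2 + t ^ 3 := by
    nlinarith [mul_pos (sub_pos.2 h1) (sub_pos.2 h2)]
  have hodd : (13 + t) ^ 5 < 0 := Odd.pow_neg (by decide) (by linarith)
  exact mul_neg_of_neg_of_pos (mul_neg_of_pos_of_neg (by nlinarith) hodd) hcubic

theorem pa2_neg (ht : t ∈ Ioo (-28 : ℝ) (-13)) : pa2 t < 0 :=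
  neg_pos.1 <| pos_of_bernstein_certificate ht.1 ht.2 (K := 2562890625 / 32) (by norm_num)
    ![1815313705353, 7093092008664, 11864333877264, 11118334425408, 6392971215360,
      2311400199168, 513398145024, 64067272704, 3439853568]
    (by simp [Fin.forall_fin_succ]) (by norm_num)
    (by simp [Fin.sum_univ_succ, pa2]; ring)

theorem pa1_sq_lt_pa2_sq_mul (ht : t ∈ Ioo (-28 : ℝ) (-13)) :
    pa1 t ^ 2 < pa2 t ^ 2 * (3 * (506 + 75 * t - t ^ 3)) :=
  sub_pos.1 <| pos_of_bernstein_certificate ht.1 ht.2 (K := 332525673007965087890625)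
    (by norm_num)
    ![2022019410903858226387437519375, 18098397501400655665037302410000,
      74714056713761648967189916200000, 188951708252955063259716249600000,
      327876181714590190246245427200000, 414220864366652835767691386880000,
      394385246831168395701865390080000, 288869712745081394415314534400000,
      164608702212616747290604339200000, 73264382628351994612835942400000,
      25400406706276096214858465280000, 6791330710086086221816135680000,
      1373532452292181605167923200000, 203239447943367349606809600000,
      20759211334104257868595200000, 1308270597422700885442560000,
      38337599924474751221760000, 0, 0, 0, 0]
    (by simp [Fin.forall_fin_succ]) (by norm_num)
    (by simp [Fin.sum_univ_succ, pa1, pa2]; ring)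

theorem pa1_add_pa2_mul_ω_nonpos (ht : t ∈ Ioo (-28 : ℝ) (-13)) :
    pa1 t + pa2 t * ω t ≤ 0 := by
  have hneg : pa2 t * ω t ≤ 0 :=
    mul_nonpos_of_nonpos_of_nonneg (pa2_neg ht).le (Real.sqrt_nonneg _)
  have hsq : pa1 t ^ 2 ≤ (-(pa2 t * ω t)) ^ 2 := by
    rw [neg_sq, mul_pow, ω_sq ht]
    exact (pa1_sq_lt_pa2_sq_mul ht).le
  linarith [(abs_le_of_sq_le_sq' hsq (neg_nonneg.2 hneg)).2]

theorem α_sq (ht : t ∈ Ioo (-28 : ℝ) (-13)) : α t ^ 2 = (pa1 t + pa2 t * ω t) / q5 t :=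
  Real.sq_sqrt (div_nonneg_of_nonpos (pa1_add_pa2_mul_ω_nonpos ht) (q5_neg ht).le)

end

theorem quadratic_eq_zero_of_vieta {x w W p r q c₀ c₁ c₂ : ℝ} (hw : w ^ 2 = W) (hq : q ≠ 0)
    (hx : x = (p + r * w) / q) (hsum : c₁ * q = -2 * c₂ * p)
    (hprod : c₀ * q ^ 2 = c₂ * (p ^ 2 - r ^ 2 * W)) :
    c₀ + x * c₁ + x ^ 2 * c₂ = 0 := by
  subst hx hw
  field_simp
  linear_combination hprod + (p + r * w) * hsum

theorem Q3_eq_zero_of_sq_eq {a t w : ℝ} (hw : w ^ 2 = 3 * (506 + 75 * t - t ^ 3))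
    (hq : q5 t ≠ 0) (ha : a ^ 2 = (pa1 t + pa2 t * w) / q5 t) : Q3 a t = 0 := by
  rw [Q3, show a ^ 4 = (a ^ 2) ^ 2 by ring]
  exact quadratic_eq_zero_of_vieta hw hq ha (by unfold pa1 q5; ring)
    (by unfold pa1 pa2 q5; ring)

theorem stmt2_general (θ : ℝ)
    (hθroot : θ ^ 3 + 27 * θ ^ 2 - 93 * θ - 1847 = 0) :
    ∀ t ∈ Set.Ioo θ (-13 : ℝ), Q3 (α t) t = 0 := by
  intro t ht
  have ht' : t ∈ Ioo (-28 : ℝ) (-13) := ⟨(neg_28_lt_of_cubic_eq_zero hθroot).trans ht.1, ht.2⟩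
  exact Q3_eq_zero_of_sq_eq (ω_sq ht') (q5_neg ht').ne (α_sq ht')

/-- for every t ∈ I = (θ, −13) one has Q₃(α(t), t) = 0. -/
theorem stmt2 (θ : ℝ)
    (hθroot : θ ^ 3 + 27 * θ ^ 2 - 93 * θ - 1847 = 0)
    (hθmin : ∀ x : ℝ, x ^ 3 + 27 * x ^ 2 - 93 * x - 1847 = 0 → θ ≤ x) :
    ∀ t ∈ Set.Ioo θ (-13 : ℝ), Q3 (α t) t = 0 :=
  stmt2_general θ hθroot
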